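/- (The curl dynamics of the frustrated model is autonomous.) Let A be a real n × p matrix and B a real q × n matrix with B·A = 0, and in Euclidean ℝⁿ let P_c be the orthogonal projection onto the range of x ↦ Bᵀ·x. Fix α₁ ∈ ℝⁿ and α₂ ∈ ℝ^{2q}, and define the frustrated simplicial Kuramoto vector field K(θ) := −α₁ − A·sin(Aᵀ·θ) − (Bᵀ·V_qᵀ)⁻ · sin(V_q·B·θ + α₂). Then for every θ ∈ ℝⁿ, P_c(K(θ)) = −P_c(α₁) − P_c( (Bᵀ·V_qᵀ)⁻ · sin(V_q·B·(P_c θ) + α₂) ); in particular P_c(K(θ)) depends on θ only through its curl projection P_c θ. -/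

import Mathlib

/-!
Since `B * A = 0`, the range of `A` lies in `ker B = (range Bᵀ)ᗮ`, so the curl projection kills
the gradient term `A sin(Aᵀ θ)`. Likewise `θ - P_c θ ∈ ker B`, so `B θ = B (P_c θ)`, and the
frustrated term sees `θ` only through `P_c θ`. Linearity of `P_c` does the rest.
-/

open Matrix

/-- Entrywise negative part of a real matrix: `(X⁻)_{ij} = (X_{ij} − |X_{ij}|)/2`. -/
noncomputable def negPart {m n : Type*} (X : Matrix m n ℝ) : Matrix m n ℝ :=
  fun i j => (X i j - |X i j|) / 2

/-- The lift matrix `V_q`: the identity `I_q` stacked on top of `−I_q`. -/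
def liftMat (q : ℕ) : Matrix (Fin q ⊕ Fin q) (Fin q) ℝ :=
  Matrix.fromRows 1 (-1)

section CurlSubspace

variable {m n p : Type*} [Fintype m] [Fintype n] [Fintype p] {B : Matrix m n ℝ}
  {C : Submodule ℝ (EuclideanSpace ℝ n)}

theorem mem_orthogonal_iff_mulVec_eq_zero
    (hC : ∀ x : EuclideanSpace ℝ n, x ∈ C ↔ ∃ z : m → ℝ, Bᵀ *ᵥ z = x)
    (x : EuclideanSpace ℝ n) : x ∈ Cᗮ ↔ B *ᵥ x.ofLp = 0 := by
  have inner_eq {u : EuclideanSpace ℝ n} {z : m → ℝ} (hz : Bᵀ *ᵥ z = u.ofLp) :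
      inner ℝ u x = z ⬝ᵥ (B *ᵥ x.ofLp) := by
    rw [EuclideanSpace.inner_eq_star_dotProduct, ← hz, star_trivial, dotProduct_comm,
      mulVec_transpose, dotProduct_mulVec]
  rw [Submodule.mem_orthogonal]
  constructor
  · intro hx
    -- `⟪Bᵀ B x, x⟫ = ‖B x‖²`
    have := hx (WithLp.toLp 2 (Bᵀ *ᵥ B *ᵥ x.ofLp)) ((hC _).2 ⟨B *ᵥ x.ofLp, rfl⟩)
    rwa [inner_eq rfl, dotProduct_self_eq_zero] at this
  · intro hx u hu
    obtain ⟨z, hz⟩ := (hC u).1 hu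
    rw [inner_eq hz, hx, dotProduct_zero]

theorem orthogonalProjectionOnto_mulVec_eq_zero_of_mul_eq_zero
    (hC : ∀ x : EuclideanSpace ℝ n, x ∈ C ↔ ∃ z : m → ℝ, Bᵀ *ᵥ z = x)
    {A : Matrix n p ℝ} (hBA : B * A = 0) (v : p → ℝ) :
    C.orthogonalProjectionOnto (WithLp.toLp 2 (A *ᵥ v)) = 0 :=
  Submodule.orthogonalProjectionOnto_apply_of_mem_orthogonal <|
    (mem_orthogonal_iff_mulVec_eq_zero hC _).2 (by simp [mulVec_mulVec, hBA])

theorem mulVec_orthogonalProjectionOnto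
    (hC : ∀ x : EuclideanSpace ℝ n, x ∈ C ↔ ∃ z : m → ℝ, Bᵀ *ᵥ z = x)
    (θ : EuclideanSpace ℝ n) :
    B *ᵥ (C.orthogonalProjectionOnto θ : EuclideanSpace ℝ n).ofLp = B *ᵥ θ.ofLp := by
  have h := (mem_orthogonal_iff_mulVec_eq_zero hC _).1 (C.sub_starProjection_mem_orthogonal θ)
  rw [WithLp.ofLp_sub, mulVec_sub, sub_eq_zero] at h
  exact h.symm

end CurlSubspace

/-- The curl projection of the frustrated simplicial Kuramoto vector field is autonomous:
it depends on the phase only through its curl projection. -/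
theorem curl_dynamics_autonomous (n p q : ℕ)
    (A : Matrix (Fin n) (Fin p) ℝ) (B : Matrix (Fin q) (Fin n) ℝ)
    (hBA : B * A = 0)
    (C : Submodule ℝ (EuclideanSpace ℝ (Fin n)))
    (hC : ∀ x : EuclideanSpace ℝ (Fin n), x ∈ C ↔ ∃ z : Fin q → ℝ, Bᵀ *ᵥ z = x)
    (α₁ : Fin n → ℝ) (α₂ : Fin q ⊕ Fin q → ℝ) :
    let K : (Fin n → ℝ) → (Fin n → ℝ) := fun θ =>
      -α₁ - (A *ᵥ fun i => Real.sin ((Aᵀ *ᵥ θ) i)) -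
        negPart (Bᵀ * (liftMat q)ᵀ) *ᵥ
          (fun i => Real.sin ((liftMat q *ᵥ (B *ᵥ θ) + α₂) i))
    ∀ θ : EuclideanSpace ℝ (Fin n),
      (Submodule.orthogonalProjectionOnto C (WithLp.toLp 2 (K θ)) : EuclideanSpace ℝ (Fin n)) =
        -(Submodule.orthogonalProjectionOnto C (WithLp.toLp 2 α₁) : EuclideanSpace ℝ (Fin n)) -
          (Submodule.orthogonalProjectionOnto C (WithLp.toLp 2
            (negPart (Bᵀ * (liftMat q)ᵀ) *ᵥ
              (fun i => Real.sin ((liftMat q *ᵥ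
                (B *ᵥ (Submodule.orthogonalProjectionOnto C θ : EuclideanSpace ℝ (Fin n))) + α₂) i)))) :
            EuclideanSpace ℝ (Fin n)) := by
  intro K θ
  rw [mulVec_orthogonalProjectionOnto hC θ]
  simp only [K, WithLp.toLp_sub, WithLp.toLp_neg, map_sub, map_neg,
    orthogonalProjectionOnto_mulVec_eq_zero_of_mul_eq_zero hC hBA, sub_zero,
    Submodule.coe_sub, Submodule.coe_neg]
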